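/- For all natural numbers p, q ≥ 1, every two-coloring of the positions of a triangular board with p+q-1 levels contains either a monochromatic △_p in the first color or a monochromatic △_q in the second color. (Upper bound direction of R_1(p,q,1) ≤ p+q-1, proved by induction on p+q using the pigeonhole principle on the bottom row.) -/
import Mathlib


/-- The `n`-th triangular number. -/
def T (n : ℕ) : ℕ := n * (n + 1) / 2

/-- The positions of a triangular board with `m` levels, labeled `1, …, T m`
row by row; row `r` consists of the labels in `(T (r-1), T r]`. -/
def board (m : ℕ) : Finset ℕ := Finset.Icc 1 (T m)

/-- `S` is a triangular subset with `n` levels (a `△_n`) of the board with `m` levels: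
there are rows `1 ≤ rows 0 < rows 1 < ⋯ ≤ m` and, for each `j`, a set of `j + 1`
positions lying in row `rows j`, whose union is `S`. -/
def IsTriangleOn (m n : ℕ) (S : Finset ℕ) : Prop :=
  ∃ rows : Fin n → ℕ, StrictMono rows ∧ (∀ j, 1 ≤ rows j) ∧ (∀ j, rows j ≤ m) ∧
    ∃ L : Fin n → Finset ℕ,
      (∀ j, (L j).card = (j : ℕ) + 1) ∧
      (∀ j, L j ⊆ Finset.Ioc (T (rows j - 1)) (T (rows j))) ∧
      S = Finset.univ.biUnion L

lemma T_succ (n : ℕ) : T (n + 1) = T n + (n + 1) := by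
  have h1 : n * (n + 1) % 2 = 0 := Nat.even_iff.mp (Nat.even_mul_succ_self n)
  have h3 : (n + 1) * (n + 1 + 1) = n * (n + 1) + 2 * (n + 1) := by ring
  unfold T
  omega

lemma T_mono : Monotone T := by
  apply monotone_nat_of_le_succ
  intro n
  have := T_succ n
  omega

lemma card_Ioc_T (r : ℕ) : (Finset.Ioc (T r) (T (r + 1))).card = r + 1 := by
  rw [Nat.card_Ioc, T_succ]; omega

lemma row_sub_board {r m : ℕ} (h2 : r + 1 ≤ m) :
    Finset.Ioc (T r) (T (r + 1)) ⊆ board m := by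
  intro x hx
  simp only [Finset.mem_Ioc] at hx
  simp only [board, Finset.mem_Icc]
  exact ⟨by omega, hx.2.trans (T_mono h2)⟩

lemma board_mono {m m' : ℕ} (h : m ≤ m') : board m ⊆ board m' :=
  Finset.Icc_subset_Icc le_rfl (T_mono h)

lemma triangle_mono {m m' n : ℕ} {S : Finset ℕ} (h : m ≤ m') :
    IsTriangleOn m n S → IsTriangleOn m' n S := by
  rintro ⟨rows, h1, h2, h3, L, h4, h5, h6⟩
  exact ⟨rows, h1, h2, fun j => (h3 j).trans h, L, h4, h5, h6⟩

lemma mem_board_row {m x : ℕ} (hx : x ∈ board m) :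
    ∃ r, 1 ≤ r ∧ r ≤ m ∧ x ∈ Finset.Ioc (T (r - 1)) (T r) := by
  induction m with
  | zero => simp [board, T] at hx
  | succ m ih =>
    simp only [board, Finset.mem_Icc] at hx
    by_cases h : x ≤ T m
    · obtain ⟨r, h1, h2, h3⟩ := ih (by simp [board, Finset.mem_Icc]; exact ⟨hx.1, h⟩)
      exact ⟨r, h1, by omega, h3⟩
    · refine ⟨m + 1, by omega, le_rfl, ?_⟩
      simp only [Nat.add_sub_cancel, Finset.mem_Ioc]
      exact ⟨by omega, hx.2⟩

lemma triangle_single {m x : ℕ} (hx : x ∈ board m) : IsTriangleOn m 1 {x} := by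
  obtain ⟨r, h1, h2, h3⟩ := mem_board_row hx
  refine ⟨fun _ => r, fun i j h => absurd (Subsingleton.elim i j) (ne_of_lt h),
    fun _ => h1, fun _ => h2, fun _ => {x}, by simp, fun _ => ?_, by ext y; simp⟩
  exact Finset.singleton_subset_iff.mpr h3

lemma full_triangle (m n : ℕ) (h : n ≤ m) :
    ∃ S, IsTriangleOn m n S ∧ S ⊆ board m := by
  refine ⟨Finset.univ.biUnion (fun j : Fin n => Finset.Ioc (T j) (T (j + 1))),
    ⟨fun j => (j : ℕ) + 1, ?_, fun j => Nat.succ_le_succ (Nat.zero_le _),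
     fun j => Nat.succ_le_of_lt (lt_of_lt_of_le j.isLt h),
     fun j => Finset.Ioc (T j) (T (j + 1)), fun j => card_Ioc_T _, fun j => ?_, rfl⟩, ?_⟩
  · intro i j hij
    exact Nat.succ_lt_succ (Fin.lt_def.mp hij)
  · simp only [Nat.add_sub_cancel]; exact subset_rfl
  · exact Finset.biUnion_subset.mpr fun j _ => row_sub_board (by have := j.isLt; omega)

lemma triangle_extend {m n : ℕ} {S Ln : Finset ℕ} (h : IsTriangleOn m n S)
    (hLn : Ln ⊆ Finset.Ioc (T m) (T (m + 1))) (hc : Ln.card = n + 1) :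
    IsTriangleOn (m + 1) (n + 1) (S ∪ Ln) := by
  obtain ⟨rows, hmono, h1, hm, L, hcard, hsub, hS⟩ := h
  refine ⟨fun j => if h : (j : ℕ) < n then rows ⟨j, h⟩ else m + 1, ?_, ?_, ?_,
    fun j => if h : (j : ℕ) < n then L ⟨j, h⟩ else Ln, ?_, ?_, ?_⟩
  · intro i j hij
    have hij' : (i : ℕ) < (j : ℕ) := hij
    by_cases hj : (j : ℕ) < n
    · have hi : (i : ℕ) < n := lt_trans hij' hj
      simp only [dif_pos hi, dif_pos hj]
      exact hmono (show (⟨(i : ℕ), hi⟩ : Fin n) < ⟨(j : ℕ), hj⟩ from hij')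
    · by_cases hi : (i : ℕ) < n
      · simp only [dif_pos hi, dif_neg hj]
        exact lt_of_le_of_lt (hm _) (Nat.lt_succ_self m)
      · have hj' : (j : ℕ) < n + 1 := j.isLt
        omega
  · intro j
    by_cases hj : (j : ℕ) < n
    · simp only [dif_pos hj]; exact h1 _
    · simp only [dif_neg hj]; omega
  · intro j
    by_cases hj : (j : ℕ) < n
    · simp only [dif_pos hj]; exact le_trans (hm _) (Nat.le_succ m)
    · simp only [dif_neg hj]; exact le_rfl
  · intro j
    by_cases hj : (j : ℕ) < n
    · simp only [dif_pos hj]; exact hcard _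
    · simp only [dif_neg hj]
      have hje : (j : ℕ) = n := by have := j.isLt; omega
      rw [hc, hje]
  · intro j
    by_cases hj : (j : ℕ) < n
    · simp only [dif_pos hj]; exact hsub _
    · simp only [dif_neg hj, Nat.add_sub_cancel]; exact hLn
  · rw [hS]; ext x
    simp only [Finset.mem_union, Finset.mem_biUnion, Finset.mem_univ, true_and]
    constructor
    · rintro (⟨j, hj⟩ | hx)
      · refine ⟨⟨(j : ℕ), by omega⟩, ?_⟩
        have hjn : ((⟨(j : ℕ), by omega⟩ : Fin (n + 1)) : ℕ) < n := j.isLt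
        simp only [dif_pos hjn]
        simpa using hj
      · exact ⟨⟨n, by omega⟩, by simp only [dif_neg (lt_irrefl n)]; exact hx⟩
    · rintro ⟨j, hj⟩
      by_cases h : (j : ℕ) < n
      · rw [dif_pos h] at hj
        exact Or.inl ⟨⟨(j : ℕ), h⟩, hj⟩
      · rw [dif_neg h] at hj
        exact Or.inr hj

lemma base_left (q m : ℕ) (hm : q + 1 ≤ m) (X : Finset ℕ) (hX : X ⊆ board m) :
    (∃ S, IsTriangleOn m 1 S ∧ S ⊆ X) ∨
    (∃ S, IsTriangleOn m (q + 1) S ∧ S ⊆ board m \ X) := by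
  rcases X.eq_empty_or_nonempty with rfl | ⟨x, hx⟩
  · obtain ⟨S, h1, h2⟩ := full_triangle m (q + 1) hm
    exact Or.inr ⟨S, h1, by simpa using h2⟩
  · exact Or.inl ⟨{x}, triangle_single (hX hx), Finset.singleton_subset_iff.mpr hx⟩

lemma base_right (p m : ℕ) (hm : p + 1 ≤ m) (X : Finset ℕ) (hX : X ⊆ board m) :
    (∃ S, IsTriangleOn m (p + 1) S ∧ S ⊆ X) ∨
    (∃ S, IsTriangleOn m 1 S ∧ S ⊆ board m \ X) := by
  rcases (board m \ X).eq_empty_or_nonempty with h | ⟨x, hx⟩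
  · obtain ⟨S, h1, h2⟩ := full_triangle m (p + 1) hm
    refine Or.inl ⟨S, h1, fun y hy => ?_⟩
    by_contra hyX
    have : y ∈ board m \ X := Finset.mem_sdiff.mpr ⟨h2 hy, hyX⟩
    simp [h] at this
  · exact Or.inr ⟨{x}, triangle_single (Finset.mem_sdiff.mp hx).1,
      Finset.singleton_subset_iff.mpr hx⟩

lemma main_lemma : ∀ n p q : ℕ, p + q = n → ∀ X : Finset ℕ, X ⊆ board (p + q + 1) →
    (∃ S, IsTriangleOn (p + q + 1) (p + 1) S ∧ S ⊆ X) ∨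
    (∃ S, IsTriangleOn (p + q + 1) (q + 1) S ∧ S ⊆ board (p + q + 1) \ X) := by
  intro n
  induction n with
  | zero =>
    intro p q hpq X hX
    obtain ⟨rfl, rfl⟩ : p = 0 ∧ q = 0 := by omega
    exact base_left 0 1 le_rfl X hX
  | succ n ih =>
    intro p q hpq X hX
    rcases p with _ | a
    · exact base_left q (0 + q + 1) (by omega) X hX
    rcases q with _ | b
    · exact base_right (a + 1) (a + 1 + 0 + 1) (by omega) X hX
    -- p = a + 1, q = b + 1, board has a + b + 3 levels
    rw [show a + 1 + (b + 1) + 1 = (a + b + 2) + 1 from by omega] at hX ⊢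
    have hcardR : (Finset.Ioc (T (a + b + 2)) (T (a + b + 2 + 1))).card = a + b + 3 := by
      rw [card_Ioc_T]
    have hsplit := Finset.card_inter_add_card_sdiff
      (Finset.Ioc (T (a + b + 2)) (T (a + b + 2 + 1))) X
    by_cases hA : a + 2 ≤ (Finset.Ioc (T (a + b + 2)) (T (a + b + 2 + 1)) ∩ X).card
    · obtain ⟨La, hLa, hLac⟩ := Finset.exists_subset_card_eq hA
      have ih' := ih a (b + 1) (by omega) (X ∩ board (a + (b + 1) + 1))
        Finset.inter_subset_right
      rw [show a + (b + 1) + 1 = a + b + 2 from by omega] at ih'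
      rcases ih' with ⟨S, hS, hSX⟩ | ⟨S, hS, hSc⟩
      · left
        refine ⟨S ∪ La, triangle_extend hS (hLa.trans Finset.inter_subset_left) hLac, ?_⟩
        exact Finset.union_subset (hSX.trans Finset.inter_subset_left)
          (hLa.trans Finset.inter_subset_right)
      · right
        refine ⟨S, triangle_mono (Nat.le_succ _) hS, fun y hy => ?_⟩
        have := hSc hy
        simp only [Finset.mem_sdiff, Finset.mem_inter, not_and] at this
        refine Finset.mem_sdiff.mpr ⟨board_mono (Nat.le_succ _) this.1, fun hyX => ?_⟩
        exact this.2 hyX this.1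
    · have hB : b + 2 ≤ (Finset.Ioc (T (a + b + 2)) (T (a + b + 2 + 1)) \ X).card := by
        omega
      obtain ⟨Lb, hLb, hLbc⟩ := Finset.exists_subset_card_eq hB
      have ih' := ih (a + 1) b (by omega) (X ∩ board (a + 1 + b + 1))
        Finset.inter_subset_right
      rw [show a + 1 + b + 1 = a + b + 2 from by omega] at ih'
      rcases ih' with ⟨S, hS, hSX⟩ | ⟨S, hS, hSc⟩
      · left
        exact ⟨S, triangle_mono (Nat.le_succ _) hS, hSX.trans Finset.inter_subset_left⟩
      · right
        refine ⟨S ∪ Lb, triangle_extend hS (hLb.trans Finset.sdiff_subset) hLbc, ?_⟩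
        refine Finset.union_subset (fun y hy => ?_) (fun y hy => ?_)
        · have := hSc hy
          simp only [Finset.mem_sdiff, Finset.mem_inter, not_and] at this
          exact Finset.mem_sdiff.mpr ⟨board_mono (Nat.le_succ _) this.1,
            fun hyX => this.2 hyX this.1⟩
        · have := hLb hy
          simp only [Finset.mem_sdiff] at this
          exact Finset.mem_sdiff.mpr
            ⟨row_sub_board (le_refl (a + b + 2 + 1)) this.1, this.2⟩


/-- For all `p, q ≥ 1`, every two-coloring of the positions of the board with
`p + q - 1` levels contains a `△_p` in the first color or a `△_q` in the second color. -/
theorem R1_upper_bound (p q : ℕ) (hp : 1 ≤ p) (hq : 1 ≤ q)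
    (X : Finset ℕ) (hX : X ⊆ board (p + q - 1)) :
    (∃ S, IsTriangleOn (p + q - 1) p S ∧ S ⊆ X) ∨
    (∃ S, IsTriangleOn (p + q - 1) q S ∧ S ⊆ board (p + q - 1) \ X) := by
  obtain ⟨a, rfl⟩ : ∃ a, p = a + 1 := ⟨p - 1, by omega⟩
  obtain ⟨b, rfl⟩ : ∃ b, q = b + 1 := ⟨q - 1, by omega⟩
  rw [show a + 1 + (b + 1) - 1 = a + b + 1 from by omega] at hX ⊢
  exact main_lemma (a + b) a b rfl X hX
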